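/- arXiv:math/0207136 — 4 statements merged into one kernel-verified Lean document; each statement's English description precedes it below -/
import Mathlib

section
/- If A and B are distinct bases of a matroid, a ∈ ℝ^n is a linear functional with a·1_A = a·1_B maximal among all bases, and |A Δ B| > 2, then there exists a basis C distinct from both A and B with a·1_C ≥ a·1_A. -/
/-! Exchange the `a`-cheapest element `x` of `A \ B` for some `y ∈ B \ A`, and symmetrically the
cheapest `x'` of `B \ A` for some `y' ∈ A \ B`. Maximality of the common value on both exchanged
bases, together with the choice of `x` and `x'`, gives
`a y ≤ a x ≤ a y' ≤ a x' ≤ a y`, so `C = A - x + y` attains the maximum as well. It differs from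
`A`, and it differs from `B` because `A Δ C = {x, y}` while `|A Δ B| > 2`. -/

open Matrix

noncomputable def indVec {n : ℕ} (A : Set (Fin n)) : Fin n → ℝ := A.indicator 1

open Set

lemma Set.symmDiff_insert_diff_singleton {α : Type*} {A : Set α} {x y : α} (hx : x ∈ A)
    (hy : y ∉ A) : symmDiff A (insert y (A \ {x})) = {x, y} := by
  ext z
  by_cases hzx : z = x <;> by_cases hzy : z = y <;> simp_all [mem_symmDiff]

lemma dotProduct_indVec_singleton {n : ℕ} (a : Fin n → ℝ) (x : Fin n) :
    a ⬝ᵥ indVec {x} = a x := by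
  simp [dotProduct, indVec, indicator_apply]

lemma dotProduct_indVec_insert_diff_singleton {n : ℕ} (a : Fin n → ℝ) {S : Set (Fin n)}
    {x y : Fin n} (hx : x ∈ S) (hy : y ∉ S) :
    a ⬝ᵥ indVec (insert y (S \ {x})) = a ⬝ᵥ indVec S - a x + a y := by
  have hind : indVec (insert y (S \ {x})) = indVec S - indVec {x} + indVec {y} := by
    funext i
    have hxy : x ≠ y := ne_of_mem_of_not_mem hx hy
    by_cases hix : i = x <;> by_cases hiy : i = y <;> by_cases hiS : i ∈ S <;>
      simp_all [indVec]
  rw [hind, dotProduct_add, dotProduct_sub, dotProduct_indVec_singleton,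
    dotProduct_indVec_singleton]

namespace Matroid

variable {α : Type*} {M : Matroid α} {A B : Set α}

lemma IsBase.nonempty_diff (hA : M.IsBase A) (hB : M.IsBase B) (hAB : A ≠ B) :
    (A \ B).Nonempty :=
  nonempty_iff_ne_empty.2 fun h ↦ hAB (hA.eq_of_subset_isBase hB (sdiff_eq_empty.1 h))

lemma IsBase.exists_exchange_of_isMinOn_diff [M.RankFinite] {β : Type*} [LinearOrder β]
    (f : α → β) (hA : M.IsBase A) (hB : M.IsBase B) (hAB : A ≠ B) :
    ∃ x ∈ A \ B, IsMinOn f (A \ B) x ∧ ∃ y ∈ B \ A, M.IsBase (insert y (A \ {x})) := by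
  obtain ⟨x, hx, hmin⟩ :=
    exists_min_image (A \ B) f hA.finite.sdiff (hA.nonempty_diff hB hAB)
  exact ⟨x, hx, isMinOn_iff.2 hmin, hA.exchange hB hx⟩

end Matroid

lemma le_of_isBase_exchange_of_forall_le {n : ℕ} {M : Matroid (Fin n)} {A : Set (Fin n)}
    {a : Fin n → ℝ} {x y : Fin n} (hmax : ∀ C, M.IsBase C → a ⬝ᵥ indVec C ≤ a ⬝ᵥ indVec A)
    (hx : x ∈ A) (hy : y ∉ A) (hC : M.IsBase (insert y (A \ {x}))) : a y ≤ a x := by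
  have := hmax _ hC
  rw [dotProduct_indVec_insert_diff_singleton a hx hy] at this
  linarith

theorem exists_third_basis_on_face {n : ℕ} (M : Matroid (Fin n)) (A B : Set (Fin n))
    (hA : M.IsBase A) (hB : M.IsBase B) (hAB : A ≠ B) (a : Fin n → ℝ)
    (heq : a ⬝ᵥ indVec A = a ⬝ᵥ indVec B)
    (hmax : ∀ C, M.IsBase C → a ⬝ᵥ indVec C ≤ a ⬝ᵥ indVec A)
    (hcard : 2 < (symmDiff A B).ncard) :
    ∃ C, M.IsBase C ∧ C ≠ A ∧ C ≠ B ∧ a ⬝ᵥ indVec A ≤ a ⬝ᵥ indVec C := by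
  obtain ⟨x, hx, hxmin, y, hy, hC⟩ := hA.exists_exchange_of_isMinOn_diff a hB hAB
  obtain ⟨x', hx', hx'min, y', hy', hC'⟩ := hB.exists_exchange_of_isMinOn_diff a hA hAB.symm
  have hyx := le_of_isBase_exchange_of_forall_le hmax hx.1 hy.2 hC
  have hy'x' := le_of_isBase_exchange_of_forall_le (heq ▸ hmax) hx'.1 hy'.2 hC'
  have hxy : a y = a x := by
    linarith [isMinOn_iff.1 hxmin y' hy', isMinOn_iff.1 hx'min y hy]
  refine ⟨_, hC, fun h ↦ hy.2 (h ▸ mem_insert y _), ?_, ?_⟩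
  · rintro rfl
    rw [symmDiff_insert_diff_singleton hx.1 hy.2, ncard_pair (ne_of_mem_of_not_mem hx.1 hy.2)]
      at hcard
    exact hcard.false
  · rw [dotProduct_indVec_insert_diff_singleton a hx.1 hy.2, hxy]
    linarith
end

section
/- For distinct bases A, B of a matroid, if i ∈ A \ B is an element of minimum weight a_i among all elements of the symmetric difference A Δ B (for a given weight function a : N → ℝ), then there exists j ∈ B \ A such that (A \ {i}) ∪ {j} is a basis and a((A\{i})∪{j}) ≥ a(A). -/
open Set

theorem finsum_mem_le_finsum_mem_exchange {α M : Type*} [AddCommMonoid M] [PartialOrder M]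
    [IsOrderedAddMonoid M] {f : α → M} {s : Set α} {i j : α} (hs : s.Finite) (hi : i ∈ s)
    (hj : j ∉ s) (hij : f i ≤ f j) :
    ∑ᶠ k ∈ s, f k ≤ ∑ᶠ k ∈ s \ {i} ∪ {j}, f k := by
  have hs' : (s \ {i}).Finite := hs.sdiff
  calc ∑ᶠ k ∈ s, f k = f i + ∑ᶠ k ∈ s \ {i}, f k := by
        rw [← finsum_mem_insert f (notMem_sdiff_of_mem (mem_singleton i)) hs',
          insert_sdiff_singleton, insert_eq_of_mem hi]
    _ ≤ f j + ∑ᶠ k ∈ s \ {i}, f k := add_le_add_left hij _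
    _ = ∑ᶠ k ∈ s \ {i} ∪ {j}, f k := by
        rw [union_singleton, finsum_mem_insert f (fun h ↦ hj h.1) hs']

theorem exchange_min_weight_element_general {α : Type*} [Fintype α] (M : Matroid α) (a : α → ℝ)
    (A B : Set α) (hA : M.IsBase A) (hB : M.IsBase B)
    (i : α) (hi : i ∈ A \ B) (hmin : ∀ k ∈ symmDiff A B, a i ≤ a k) :
    ∃ j ∈ B \ A, M.IsBase ((A \ {i}) ∪ {j}) ∧
      (∑ᶠ k ∈ A, a k) ≤ ∑ᶠ k ∈ (A \ {i}) ∪ {j}, a k := by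
  obtain ⟨j, hj, hbase⟩ := hA.exchange hB hi
  have hij : a i ≤ a j := hmin j (mem_symmDiff.2 (Or.inr hj))
  exact ⟨j, hj, by rwa [union_singleton],
    finsum_mem_le_finsum_mem_exchange A.toFinite hi.1 hj.2 hij⟩

theorem exchange_min_weight_element {α : Type*} [Fintype α] (M : Matroid α) (a : α → ℝ)
    (A B : Set α) (hA : M.IsBase A) (hB : M.IsBase B) (hAB : A ≠ B)
    (i : α) (hi : i ∈ A \ B) (hmin : ∀ k ∈ symmDiff A B, a i ≤ a k) :
    ∃ j ∈ B \ A, M.IsBase ((A \ {i}) ∪ {j}) ∧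
      (∑ᶠ k ∈ A, a k) ≤ ∑ᶠ k ∈ (A \ {i}) ∪ {j}, a k :=
  exchange_min_weight_element_general M a A B hA hB i hi hmin
end

section
/- Every edge of the polytope P_w^M := conv{w(B) : B a basis of M} is parallel to w(i) − w(j) for some pair i, j ∈ N. Precisely: if u, v are distinct vertices of P_w^M such that [u,v] is a face of P_w^M exposed by a linear functional, then u − v = t·(w(i) − w(j)) for some i, j ∈ N and some real t. -/
/-!
Let `B₁`, `B₂` be bases with `w(B₁) = u` and `w(B₂) = v`; they exist because the endpoints of an
exposed segment are extreme points of the hull, hence images of bases. Symmetric exchange of some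
`e ∈ B₁ \ B₂` against some `f ∈ B₂ \ B₁` gives two bases with sums `u + (w f - w e)` and
`v - (w f - w e)`. Their values under the exposing functional add up to twice its maximum, so both
lie on the face `[u, v]`, and `w f - w e` is a nonnegative multiple of `v - u`. If the multiple is
nonzero it yields the edge direction; otherwise the exchanged base still sums to `u` and is closer
to `B₂`, so we conclude by induction on `|B₁ \ B₂|`.
-/

open Matrix

noncomputable def wsum {α : Type*} {d : ℕ} (w : α → (Fin d → ℝ)) (J : Set α) : Fin d → ℝ :=
  ∑ᶠ j ∈ J, w j

open Set

theorem wsum_insert_sdiff_singleton {α : Type*} {d : ℕ} (w : α → Fin d → ℝ) {B : Set α}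
    {i j : α} (hB : B.Finite) (hi : i ∈ B) (hj : j ∉ B) :
    wsum w (insert j (B \ {i})) = wsum w B + (w j - w i) := by
  have hsplit := finsum_mem_insert w (fun h : i ∈ B \ {i} ↦ h.2 rfl) hB.sdiff
  rw [insert_sdiff_singleton, insert_eq_of_mem hi] at hsplit
  rw [wsum, wsum, finsum_mem_insert w (fun h ↦ hj h.1) hB.sdiff, hsplit]
  abel

namespace Matroid

variable {α : Type*} {M : Matroid α} {B₁ B₂ : Set α} {e : α}

theorem IsBase.symmetric_exchange (hB₁ : M.IsBase B₁) (hB₂ : M.IsBase B₂) (he : e ∈ B₁ \ B₂) :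
    ∃ f ∈ B₂ \ B₁, M.IsBase (insert f (B₁ \ {e})) ∧ M.IsBase (insert e (B₂ \ {f})) := by
  have heE : e ∈ M.E := hB₁.subset_ground he.1
  have hC := hB₂.fundCircuit_isCircuit heE he.2
  have hK := hB₁.compl_closure_sdiff_singleton_isCocircuit he.1
  have heK : e ∈ M.E \ M.closure (B₁ \ {e}) := ⟨heE, hB₁.indep.notMem_closure_sdiff_of_mem he.1⟩
  -- a circuit and a cocircuit never meet in exactly one element
  obtain ⟨f, ⟨hfC, hfE, hfcl⟩, hfe⟩ :=
    (hC.isCocircuit_inter_nontrivial hK ⟨e, M.mem_fundCircuit e B₂, heK⟩).exists_ne e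
  have hfB₂ : f ∈ B₂ := ((M.fundCircuit_subset_insert e B₂) hfC).resolve_left hfe
  have hfB₁ : f ∉ B₁ := fun hfB₁ ↦
    hfcl (M.subset_closure _ (sdiff_subset.trans hB₁.subset_ground) ⟨hfB₁, hfe⟩)
  refine ⟨f, ⟨hfB₂, hfB₁⟩, hB₁.exchange_base_of_notMem_closure he.1 hfcl, ?_⟩
  have hind := (hB₂.indep.mem_fundCircuit_iff (by rwa [hB₂.closure_eq]) he.2).1 hfC
  rw [← insert_sdiff_singleton_comm (Ne.symm hfe)] at hind
  exact hB₂.exchange_isBase_of_indep he.2 hind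

theorem exists_sub_eq_smul_sub_of_swap_mem_segment {d : ℕ} [M.RankFinite] (w : α → Fin d → ℝ)
    {u v : Fin d → ℝ} (huv : u ≠ v)
    (hswap : ∀ B B', M.IsBase B → M.IsBase B' → wsum w B + wsum w B' = u + v →
      wsum w B ∈ segment ℝ u v)
    (hB₁ : M.IsBase B₁) (hB₂ : M.IsBase B₂) (h₁ : wsum w B₁ = u) (h₂ : wsum w B₂ = v) :
    ∃ i j, ∃ t : ℝ, u - v = t • (w i - w j) := by
  induction hk : (B₁ \ B₂).ncard using Nat.strong_induction_on generalizing B₁ with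
  | _ k ih =>
  obtain ⟨e, he⟩ : (B₁ \ B₂).Nonempty := by
    rw [nonempty_iff_ne_empty, Ne, sdiff_eq_empty]
    exact fun h ↦ huv (by rw [← h₁, ← h₂, hB₁.eq_of_subset_isBase hB₂ h])
  obtain ⟨f, hf, hB₁', hB₂'⟩ := hB₁.symmetric_exchange hB₂ he
  have hw₁ : wsum w (insert f (B₁ \ {e})) = u + (w f - w e) := by
    rw [wsum_insert_sdiff_singleton w hB₁.finite he.1 hf.2, h₁]
  have hw₂ : wsum w (insert e (B₂ \ {f})) = v + (w e - w f) := by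
    rw [wsum_insert_sdiff_singleton w hB₂.finite hf.1 he.2, h₂]
  obtain ⟨s, -, hs⟩ : u + (w f - w e) ∈ (fun θ : ℝ ↦ u + θ • (v - u)) '' Icc 0 1 := by
    rw [← segment_eq_image', ← hw₁]
    exact hswap _ _ hB₁' hB₂' (by rw [hw₁, hw₂]; abel)
  have hfe : w f - w e = s • (v - u) := (add_left_cancel hs).symm
  rcases eq_or_ne s 0 with rfl | hs0
  · refine ih _ ?_ hB₁' (by rw [hw₁, hfe, zero_smul, add_zero]) rfl
    rw [← hk, insert_sdiff_of_mem _ hf.1, sdiff_right_comm]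
    exact ncard_sdiff_singleton_lt_of_mem he hB₁.finite.sdiff
  · refine ⟨e, f, s⁻¹, ?_⟩
    rw [← neg_sub (w f), hfe, ← smul_neg, neg_sub, smul_smul, inv_mul_cancel₀ hs0, one_smul]

end Matroid

section Convex

variable {𝕜 E : Type*} [Field 𝕜] [LinearOrder 𝕜] [IsStrictOrderedRing 𝕜] [AddCommGroup E]
  [Module 𝕜 E]

theorem left_mem_extremePoints_segment (u v : E) : u ∈ (segment 𝕜 u v).extremePoints 𝕜 := by
  refine ⟨left_mem_segment 𝕜 u v, fun x₁ hx₁ x₂ hx₂ hu ↦ ?_⟩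
  rw [segment_eq_image'] at hx₁ hx₂
  obtain ⟨s₁, ⟨hs₁, -⟩, rfl⟩ := hx₁
  obtain ⟨s₂, ⟨hs₂, -⟩, rfl⟩ := hx₂
  obtain ⟨p, q, hp, hq, hpq, h⟩ := hu
  have hzero : (p * s₁ + q * s₂) • (v - u) = 0 := calc
    _ = p • (u + s₁ • (v - u)) + q • (u + s₂ • (v - u)) - (p + q) • u := by module
    _ = 0 := by rw [h, hpq, one_smul, sub_self]
  rcases smul_eq_zero.1 hzero with hcoef | hvu
  · have : p * s₁ = 0 := by nlinarith [mul_nonneg hp.le hs₁, mul_nonneg hq.le hs₂]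
    simp [(mul_eq_zero.1 this).resolve_left hp.ne']
  · simp [hvu]

variable [TopologicalSpace 𝕜] [TopologicalSpace E] {l : StrongDual 𝕜 E}

theorem ContinuousLinearMap.mem_toExposed_of_add_eq {A : Set E} {x y p q : E} (hx : x ∈ A)
    (hy : y ∈ A) (hp : p ∈ l.toExposed A) (hq : q ∈ l.toExposed A) (h : x + y = p + q) :
    x ∈ l.toExposed A := by
  refine ⟨hx, fun z hz ↦ ?_⟩
  have hsum : l x + l y = l p + l q := by rw [← map_add, h, map_add]
  linarith [hp.2 z hz, hq.2 y hy]

theorem ContinuousLinearMap.left_mem_of_toExposed_convexHull_eq_segment {S : Set E} {u v : E}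
    (h : l.toExposed (convexHull 𝕜 S) = segment 𝕜 u v) : u ∈ S := by
  have hext : IsExtreme 𝕜 (convexHull 𝕜 S) (segment 𝕜 u v) :=
    h ▸ ContinuousLinearMap.toExposed.isExposed.isExtreme
  exact extremePoints_convexHull_subset
    (hext.extremePoints_subset_extremePoints (left_mem_extremePoints_segment u v))

end Convex

theorem edge_of_projected_basis_polytope {n d : ℕ} (M : Matroid (Fin n))
    (w : Fin n → (Fin d → ℝ)) (u v : Fin d → ℝ) (huv : u ≠ v)
    (P : Set (Fin d → ℝ)) (hP : P = convexHull ℝ {x | ∃ B, M.IsBase B ∧ x = wsum w B})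
    (hface : ∃ a : Fin d → ℝ,
      {x ∈ P | ∀ y ∈ P, a ⬝ᵥ y ≤ a ⬝ᵥ x} = segment ℝ u v) :
    ∃ (i j : Fin n) (t : ℝ), u - v = t • (w i - w j) := by
  obtain ⟨a, hface⟩ := hface
  set l : StrongDual ℝ (Fin d → ℝ) := LinearMap.toContinuousLinearMap (dotProductBilin ℝ ℝ a)
  have hF : l.toExposed P = segment ℝ u v := hface
  have hF' : l.toExposed P = segment ℝ v u := hF.trans (segment_symm ℝ u v)
  subst hP
  obtain ⟨B₁, hB₁, rfl⟩ := l.left_mem_of_toExposed_convexHull_eq_segment hF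
  obtain ⟨B₂, hB₂, rfl⟩ := l.left_mem_of_toExposed_convexHull_eq_segment hF'
  refine M.exists_sub_eq_smul_sub_of_swap_mem_segment w huv (fun B B' hB hB' hsum ↦ ?_)
    hB₁ hB₂ rfl rfl
  rw [← hF]
  exact l.mem_toExposed_of_add_eq (subset_convexHull ℝ _ ⟨B, hB, rfl⟩)
    (subset_convexHull ℝ _ ⟨B', hB', rfl⟩) (hF ▸ left_mem_segment ℝ _ _)
    (hF ▸ right_mem_segment ℝ _ _) hsum
end

section
/- If P = Σ_{k=1}^m [−1,1]·z_k is a zonotope in ℝ^d generated by segments whose directions z_1,...,z_m include (up to scalar) all edge directions of a polytope Q, and a linear functional a is uniquely maximized over P at a vertex of P, then a is uniquely maximized over Q at a vertex of Q (i.e., a is not constant on any edge of Q, hence its maximizing face of Q is a single vertex). -/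
open Matrix

private lemma dot_lin {d : ℕ} (b : Fin d → ℝ) : IsLinearMap ℝ (fun x : Fin d → ℝ => b ⬝ᵥ x) :=
  ⟨fun x y => dotProduct_add b x y, fun c x => dotProduct_smul c b x⟩

private lemma dot_sum {d : ℕ} {ι : Type*} (s : Finset ι) (b : Fin d → ℝ) (v : ι → Fin d → ℝ) :
    b ⬝ᵥ (∑ i ∈ s, v i) = ∑ i ∈ s, b ⬝ᵥ v i :=
  map_sum (dot_lin b).mk' v s

private lemma hull_le {d : ℕ} (b : Fin d → ℝ) (M : ℝ) (S : Finset (Fin d → ℝ))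
    (h : ∀ s ∈ S, b ⬝ᵥ s ≤ M) : ∀ x ∈ convexHull ℝ (S : Set (Fin d → ℝ)), b ⬝ᵥ x ≤ M :=
  fun _x hx => convexHull_min (fun s hs => h s hs) (convex_halfSpace_le (dot_lin b) M) hx

private lemma hull_ge {d : ℕ} (b : Fin d → ℝ) (M : ℝ) (S : Finset (Fin d → ℝ))
    (h : ∀ s ∈ S, M ≤ b ⬝ᵥ s) : ∀ x ∈ convexHull ℝ (S : Set (Fin d → ℝ)), M ≤ b ⬝ᵥ x :=
  fun _x hx => convexHull_min (fun s hs => h s hs) (convex_halfSpace_ge (dot_lin b) M) hx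

private lemma argmax_hull {d : ℕ} (b : Fin d → ℝ) (M : ℝ) (S : Finset (Fin d → ℝ))
    [DecidablePred fun s : Fin d → ℝ => b ⬝ᵥ s = M]
    (hM : ∀ s ∈ S, b ⬝ᵥ s ≤ M) (x : Fin d → ℝ)
    (hx : x ∈ convexHull ℝ (S : Set (Fin d → ℝ))) (hxM : b ⬝ᵥ x = M) :
    x ∈ convexHull ℝ ((S.filter fun s => b ⬝ᵥ s = M : Finset (Fin d → ℝ)) : Set (Fin d → ℝ)) := by
  rw [Finset.convexHull_eq] at hx
  obtain ⟨w, h0, h1, hc⟩ := hx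
  have hxrep : x = ∑ y ∈ S, w y • y := by
    rw [← hc, Finset.centerMass, h1, inv_one, one_smul]; rfl
  have hbx : b ⬝ᵥ x = ∑ y ∈ S, w y * (b ⬝ᵥ y) := by
    rw [hxrep, dot_sum]
    exact Finset.sum_congr rfl fun y _ => by rw [dotProduct_smul]; rfl
  have hzero : ∀ y ∈ S, w y * (M - b ⬝ᵥ y) = 0 := by
    have hsum : ∑ y ∈ S, w y * (M - b ⬝ᵥ y) = 0 := by
      have : ∑ y ∈ S, w y * (M - b ⬝ᵥ y) = M * (∑ y ∈ S, w y) - ∑ y ∈ S, w y * (b ⬝ᵥ y) := by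
        rw [Finset.mul_sum, ← Finset.sum_sub_distrib]
        exact Finset.sum_congr rfl fun y _ => by ring
      rw [this, h1, mul_one, ← hbx, hxM, sub_self]
    have hnn : ∀ y ∈ S, 0 ≤ w y * (M - b ⬝ᵥ y) := fun y hy =>
      mul_nonneg (h0 y hy) (sub_nonneg.mpr (hM y hy))
    exact (Finset.sum_eq_zero_iff_of_nonneg hnn).mp hsum
  have hw0 : ∀ y ∈ S, b ⬝ᵥ y ≠ M → w y = 0 := by
    intro y hy hne
    rcases mul_eq_zero.mp (hzero y hy) with h | h
    · exact h
    · exact absurd (by linarith [sub_eq_zero.mp h] : b ⬝ᵥ y = M) hne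
  set S' := S.filter fun s => b ⬝ᵥ s = M with hS'
  have hsum' : ∑ y ∈ S', w y = 1 := by
    rw [← h1]
    exact (Finset.sum_filter_of_ne (fun y hy hwy => by
      by_contra hne; exact hwy (hw0 y hy hne))).symm ▸ rfl
  have hrep' : x = S'.centerMass w id := by
    rw [Finset.centerMass, hsum', inv_one, one_smul, hxrep]
    have : ∑ y ∈ S', w y • y = ∑ y ∈ S, w y • y := by
      apply Finset.sum_filter_of_ne
      intro y hy hne
      by_contra hbm
      exact hne (by rw [hw0 y hy hbm, zero_smul])
    rw [← this]; rfl
  rw [hrep']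
  exact Finset.centerMass_mem_convexHull S'
    (fun i hi => h0 i (Finset.mem_filter.mp hi).1)
    (by rw [hsum']; norm_num)
    (fun i hi => Finset.mem_coe.mpr hi)

private lemma generic_vec {d : ℕ} (T : Finset (Fin d → ℝ)) (hT : (0 : Fin d → ℝ) ∉ T) :
    ∃ e : Fin d → ℝ, ∀ t ∈ T, e ⬝ᵥ t ≠ 0 := by
  classical
  induction T using Finset.induction_on with
  | empty => exact ⟨0, fun t ht => absurd ht (Finset.notMem_empty t)⟩
  | @insert t T htT ih =>
    have ht0 : t ≠ 0 := fun h => hT (h ▸ Finset.mem_insert_self t T)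
    have htt : t ⬝ᵥ t ≠ 0 := fun h => ht0 (dotProduct_self_eq_zero.mp h)
    obtain ⟨e, he⟩ := ih (fun h => hT (Finset.mem_insert_of_mem h))
    set B : Finset ℝ :=
      (insert t T).image (fun t' => if t ⬝ᵥ t' = 0 then 0 else -(e ⬝ᵥ t') / (t ⬝ᵥ t')) with hB
    obtain ⟨c, hc⟩ := Infinite.exists_notMem_finset B
    refine ⟨e + c • t, fun t' ht' => ?_⟩
    have hdot : (e + c • t) ⬝ᵥ t' = e ⬝ᵥ t' + c * (t ⬝ᵥ t') := by
      rw [add_dotProduct, smul_dotProduct, smul_eq_mul]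
    by_cases h0 : t ⬝ᵥ t' = 0
    · have ht'T : t' ∈ T := by
        rcases Finset.mem_insert.mp ht' with h | h
        · exact absurd (h ▸ h0) htt
        · exact h
      rw [hdot, h0, mul_zero, add_zero]
      exact he t' ht'T
    · rw [hdot]
      intro hzero
      apply hc
      rw [hB]
      refine Finset.mem_image.mpr ⟨t', ht', ?_⟩
      rw [if_neg h0]
      field_simp
      linarith
private lemma zono_step {d m : ℕ} (z : Fin m → (Fin d → ℝ)) (P : Set (Fin d → ℝ))
    (hP : P = {x | ∃ t : Fin m → ℝ, (∀ k, |t k| ≤ 1) ∧ x = ∑ k, t k • z k})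
    (a : Fin d → ℝ)
    (hmaxP : ∃ p ∈ P, ∀ x ∈ P, x ≠ p → a ⬝ᵥ x < a ⬝ᵥ p) :
    ∀ k, a ⬝ᵥ z k = 0 → z k = 0 := by
  classical
  intro k hak
  by_contra hzk
  obtain ⟨p, hpP, hpmax⟩ := hmaxP
  rw [hP] at hpP
  obtain ⟨t, ht, hpt⟩ := hpP
  set c : ℝ := if t k ≤ 0 then 1 else -1 with hc
  have hc0 : c ≠ 0 := by
    rw [hc]; split <;> norm_num
  set t' : Fin m → ℝ := Function.update t k (t k + c) with ht'
  have ht'b : ∀ j, |t' j| ≤ 1 := by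
    intro j
    rw [ht', Function.update_apply]
    split
    · rw [hc]
      rcases abs_le.mp (ht k) with ⟨h1, h2⟩
      split <;> [skip; push_neg at *] <;> rw [abs_le] <;> constructor <;> linarith
    · exact ht j
  set x : Fin d → ℝ := ∑ j, t' j • z j with hx
  have hxP : x ∈ P := by rw [hP]; exact ⟨t', ht'b, rfl⟩
  have hxp : x = p + c • z k := by
    rw [hx, hpt]
    have : ∀ j : Fin m, t' j • z j = t j • z j + (if j = k then c • z j else 0) := by
      intro j
      by_cases h : j = k
      · subst h; simp [ht', add_smul]
      · simp [ht', Function.update_apply, h]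
    rw [Finset.sum_congr rfl fun j _ => this j, Finset.sum_add_distrib,
      Finset.sum_ite_eq' Finset.univ k (fun j => c • z j), if_pos (Finset.mem_univ k)]
  have hxne : x ≠ p := by
    rw [hxp]
    intro h
    have : c • z k = 0 := by
      have := congrArg (fun y => y - p) h
      simpa [add_sub_cancel_left] using this
    rcases smul_eq_zero.mp this with h' | h'
    · exact hc0 h'
    · exact hzk h'
  have hax : a ⬝ᵥ x = a ⬝ᵥ p := by
    rw [hxp, dotProduct_add, dotProduct_smul, smul_eq_mul, hak, mul_zero, add_zero]
  exact absurd hax (ne_of_lt (hpmax x hxP hxne))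

private lemma face_eq {d : ℕ} (S : Finset (Fin d → ℝ)) (b : Fin d → ℝ) (M : ℝ)
    [DecidablePred fun s : Fin d → ℝ => b ⬝ᵥ s = M]
    (hub : ∀ s ∈ S, b ⬝ᵥ s ≤ M) (hwit : ∃ s ∈ S, b ⬝ᵥ s = M) :
    {x ∈ convexHull ℝ (S : Set (Fin d → ℝ)) |
        ∀ y ∈ convexHull ℝ (S : Set (Fin d → ℝ)), b ⬝ᵥ y ≤ b ⬝ᵥ x}
      = convexHull ℝ ((S.filter fun s => b ⬝ᵥ s = M : Finset _) : Set (Fin d → ℝ)) := by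
  ext x
  constructor
  · rintro ⟨hxQ, hxmax⟩
    obtain ⟨s₀, hs₀, hs₀M⟩ := hwit
    have h1 : b ⬝ᵥ x ≤ M := hull_le b M S hub x hxQ
    have h2 : M ≤ b ⬝ᵥ x := hs₀M ▸ hxmax s₀ (subset_convexHull ℝ _ hs₀)
    exact argmax_hull b M S hub x hxQ (le_antisymm h1 h2)
  · intro hx
    have hxQ : x ∈ convexHull ℝ (S : Set (Fin d → ℝ)) :=
      convexHull_mono (by exact_mod_cast Finset.filter_subset _ _) hx
    refine ⟨hxQ, fun y hy => ?_⟩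
    have hxM : M ≤ b ⬝ᵥ x := by
      refine convexHull_min (fun s hs => ?_) (convex_halfSpace_ge (dot_lin b) M) hx
      exact le_of_eq (Finset.mem_filter.mp hs).2.symm
    exact le_trans (hull_le b M S hub y hy) hxM

theorem zonotope_refines_edge_directions {d m : ℕ}
    (SQ : Finset (Fin d → ℝ)) (hSQ : SQ.Nonempty) (Q : Set (Fin d → ℝ))
    (hQ : Q = convexHull ℝ (SQ : Set (Fin d → ℝ)))
    (z : Fin m → (Fin d → ℝ))
    (P : Set (Fin d → ℝ))
    (hP : P = {x | ∃ t : Fin m → ℝ, (∀ k, |t k| ≤ 1) ∧ x = ∑ k, t k • z k})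
    (hedges : ∀ u v : Fin d → ℝ, u ≠ v →
      (∃ b : Fin d → ℝ, {x ∈ Q | ∀ y ∈ Q, b ⬝ᵥ y ≤ b ⬝ᵥ x} = segment ℝ u v) →
      ∃ (k : Fin m) (t : ℝ), u - v = t • z k)
    (a : Fin d → ℝ)
    (hmaxP : ∃ p ∈ P, ∀ x ∈ P, x ≠ p → a ⬝ᵥ x < a ⬝ᵥ p) :
    ∃ q ∈ Q, ∀ x ∈ Q, x ≠ q → a ⬝ᵥ x < a ⬝ᵥ q := by
  classical
  subst hQ
  have hz : ∀ k, a ⬝ᵥ z k = 0 → z k = 0 := zono_step z P hP a hmaxP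
  obtain ⟨q₀, hq₀S, hq₀max⟩ := SQ.exists_max_image (fun s => a ⬝ᵥ s) hSQ
  set M := a ⬝ᵥ q₀ with hM
  set S' := SQ.filter (fun s => a ⬝ᵥ s = M) with hS'def
  have hq₀' : q₀ ∈ S' := Finset.mem_filter.mpr ⟨hq₀S, rfl⟩
  have hS'sub : S' ⊆ SQ := Finset.filter_subset _ _
  have hS'M : ∀ s ∈ S', a ⬝ᵥ s = M := fun s hs => (Finset.mem_filter.mp hs).2
  by_cases hsing : ∀ s ∈ S', s = q₀
  · refine ⟨q₀, subset_convexHull ℝ _ hq₀S, ?_⟩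
    intro x hxQ hxne
    have h1 : a ⬝ᵥ x ≤ M := hull_le a M SQ (fun s hs => hq₀max s hs) x hxQ
    rcases lt_or_eq_of_le h1 with h | h
    · exact h
    · exfalso
      have hx' := argmax_hull a M SQ (fun s hs => hq₀max s hs) x hxQ h
      have : ((S' : Set (Fin d → ℝ))) ⊆ {q₀} := fun s hs => hsing s hs
      have hxq : x ∈ ({q₀} : Set (Fin d → ℝ)) := by
        have := convexHull_mono this hx'
        rwa [convexHull_singleton] at this
      exact hxne hxq
  · exfalso
    push_neg at hsing
    obtain ⟨s₁, hs₁S', hs₁ne⟩ := hsing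
    -- stage 1: generic c₀ exposing a unique vertex q of S'
    set T₁ := ((S' ×ˢ S').filter (fun pr => pr.1 ≠ pr.2)).image (fun pr => pr.1 - pr.2) with hT₁
    have h0T₁ : (0 : Fin d → ℝ) ∉ T₁ := by
      intro h
      obtain ⟨pr, hpr, hpr0⟩ := Finset.mem_image.mp h
      exact (Finset.mem_filter.mp hpr).2 (sub_eq_zero.mp hpr0)
    obtain ⟨c₀, hc₀⟩ := generic_vec T₁ h0T₁
    obtain ⟨q, hqS', hqmax⟩ := S'.exists_max_image (fun s => c₀ ⬝ᵥ s) ⟨q₀, hq₀'⟩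
    have hqstrict : ∀ w ∈ S', w ≠ q → c₀ ⬝ᵥ w < c₀ ⬝ᵥ q := by
      intro w hw hwq
      refine lt_of_le_of_ne (hqmax w hw) ?_
      intro heq
      have hmem : w - q ∈ T₁ := Finset.mem_image.mpr
        ⟨(w, q), Finset.mem_filter.mpr ⟨Finset.mem_product.mpr ⟨hw, hqS'⟩, hwq⟩, rfl⟩
      exact hc₀ _ hmem (by rw [dotProduct_sub, heq, sub_self])
    set D := S'.erase q with hDdef
    have hD : D.Nonempty := by
      by_cases h : s₁ = q
      · exact ⟨q₀, Finset.mem_erase.mpr ⟨fun hq => hs₁ne (h.trans hq.symm), hq₀'⟩⟩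
      · exact ⟨s₁, Finset.mem_erase.mpr ⟨h, hs₁S'⟩⟩
    set g : (Fin d → ℝ) → ℝ := fun w => c₀ ⬝ᵥ q - c₀ ⬝ᵥ w with hgdef
    have hg : ∀ w ∈ D, 0 < g w := by
      intro w hw
      have := hqstrict w (Finset.mem_of_mem_erase hw) (Finset.ne_of_mem_erase hw)
      simp only [hgdef, sub_pos]
      exact this
    -- stage 2: generic e, ray construction
    set T₂ := (D.image (fun w => w - q)) ∪
      (((D ×ˢ D).filter (fun pr => g pr.1 • (pr.2 - q) ≠ g pr.2 • (pr.1 - q))).image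
        (fun pr => g pr.1 • (pr.2 - q) - g pr.2 • (pr.1 - q))) with hT₂
    have h0T₂ : (0 : Fin d → ℝ) ∉ T₂ := by
      intro h
      rcases Finset.mem_union.mp h with h | h
      · obtain ⟨w, hw, hw0⟩ := Finset.mem_image.mp h
        exact Finset.ne_of_mem_erase hw (sub_eq_zero.mp hw0)
      · obtain ⟨pr, hpr, hpr0⟩ := Finset.mem_image.mp h
        exact (Finset.mem_filter.mp hpr).2 (sub_eq_zero.mp hpr0)
    obtain ⟨e₀, he₀⟩ := generic_vec T₂ h0T₂
    obtain ⟨w₁, hw₁D⟩ := hD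
    have hw₁T : w₁ - q ∈ T₂ := Finset.mem_union_left _ (Finset.mem_image.mpr ⟨w₁, hw₁D, rfl⟩)
    set e := if 0 < e₀ ⬝ᵥ (w₁ - q) then e₀ else -e₀ with hedef
    have he : ∀ t ∈ T₂, e ⬝ᵥ t ≠ 0 := by
      intro t ht
      rw [hedef]
      split
      · exact he₀ t ht
      · rw [neg_dotProduct]
        exact neg_ne_zero.mpr (he₀ t ht)
    have hew₁ : 0 < e ⬝ᵥ (w₁ - q) := by
      rw [hedef]
      split
      · assumption
      · rename_i h
        rw [neg_dotProduct]
        rcases (he₀ _ hw₁T).lt_or_gt with h' | h'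
        · linarith
        · exact absurd h' h
    set A := D.filter (fun w => 0 < e ⬝ᵥ (w - q)) with hAdef
    have hA : A.Nonempty := ⟨w₁, Finset.mem_filter.mpr ⟨hw₁D, hew₁⟩⟩
    set ratio : (Fin d → ℝ) → ℝ := fun w => g w / (e ⬝ᵥ (w - q)) with hratiodef
    obtain ⟨w₀, hw₀A, hw₀min⟩ := A.exists_min_image ratio hA
    set sS := ratio w₀ with hsSdef
    have hw₀D : w₀ ∈ D := (Finset.mem_filter.mp hw₀A).1
    have hw₀pos : 0 < e ⬝ᵥ (w₀ - q) := (Finset.mem_filter.mp hw₀A).2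
    have hsSpos : 0 < sS := div_pos (hg w₀ hw₀D) hw₀pos
    set b' := c₀ + sS • e with hb'def
    have hb'diff : ∀ w, b' ⬝ᵥ q - b' ⬝ᵥ w = g w - sS * (e ⬝ᵥ (w - q)) := by
      intro w
      rw [hb'def, add_dotProduct, add_dotProduct, smul_dotProduct, smul_dotProduct,
        smul_eq_mul, smul_eq_mul, dotProduct_sub, hgdef]
      ring
    have hb'le : ∀ w ∈ D, b' ⬝ᵥ w ≤ b' ⬝ᵥ q := by
      intro w hw
      have hkey : 0 ≤ g w - sS * (e ⬝ᵥ (w - q)) := by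
        by_cases hwA : w ∈ A
        · have h1 : sS ≤ ratio w := hw₀min w hwA
          have h2 : 0 < e ⬝ᵥ (w - q) := (Finset.mem_filter.mp hwA).2
          rw [hratiodef] at h1
          have := (le_div_iff₀ h2).mp h1
          linarith
        · have hne : e ⬝ᵥ (w - q) ≠ 0 :=
            he _ (Finset.mem_union_left _ (Finset.mem_image.mpr ⟨w, hw, rfl⟩))
          have hneg : e ⬝ᵥ (w - q) < 0 := by
            rcases hne.lt_or_gt with h | h
            · exact h
            · exact absurd (Finset.mem_filter.mpr ⟨hw, h⟩) hwA
          nlinarith [hg w hw]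
      linarith [hb'diff w]
    set W := A.filter (fun w => ratio w = sS) with hWdef
    have hw₀W : w₀ ∈ W := Finset.mem_filter.mpr ⟨hw₀A, rfl⟩
    have hWD : W ⊆ D := fun w hw => (Finset.mem_filter.mp ((Finset.mem_filter.mp hw).1)).1
    have hWeq : ∀ w ∈ D, (b' ⬝ᵥ w = b' ⬝ᵥ q ↔ w ∈ W) := by
      intro w hw
      constructor
      · intro heq
        have hd0 : g w - sS * (e ⬝ᵥ (w - q)) = 0 := by
          have := hb'diff w; linarith
        by_cases hwA : w ∈ A
        · refine Finset.mem_filter.mpr ⟨hwA, ?_⟩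
          have h2 : 0 < e ⬝ᵥ (w - q) := (Finset.mem_filter.mp hwA).2
          rw [hratiodef]
          rw [div_eq_iff h2.ne']
          linarith
        · exfalso
          have hne : e ⬝ᵥ (w - q) ≠ 0 :=
            he _ (Finset.mem_union_left _ (Finset.mem_image.mpr ⟨w, hw, rfl⟩))
          have hneg : e ⬝ᵥ (w - q) < 0 := by
            rcases hne.lt_or_gt with h | h
            · exact h
            · exact absurd (Finset.mem_filter.mpr ⟨hw, h⟩) hwA
          nlinarith [hg w hw]
      · intro hwW
        have hwA : w ∈ A := (Finset.mem_filter.mp hwW).1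
        have h2 : 0 < e ⬝ᵥ (w - q) := (Finset.mem_filter.mp hwA).2
        have h3 : ratio w = sS := (Finset.mem_filter.mp hwW).2
        rw [hratiodef] at h3
        have : g w = sS * (e ⬝ᵥ (w - q)) := (div_eq_iff h2.ne').mp h3
        have := hb'diff w
        linarith
    -- collinearity of W along the ray from q
    have hcol : ∀ w ∈ W, g w₀ • (w - q) = g w • (w₀ - q) := by
      intro w hwW
      by_contra hne
      have hwD : w ∈ D := hWD hwW
      have hmem : g w₀ • (w - q) - g w • (w₀ - q) ∈ T₂ := by
        refine Finset.mem_union_right _ (Finset.mem_image.mpr ⟨(w₀, w), ?_, rfl⟩)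
        exact Finset.mem_filter.mpr ⟨Finset.mem_product.mpr ⟨hw₀D, hwD⟩, hne⟩
      apply he _ hmem
      rw [dotProduct_sub, dotProduct_smul, dotProduct_smul, smul_eq_mul, smul_eq_mul]
      have hrw : ratio w = sS := (Finset.mem_filter.mp hwW).2
      have hwA : w ∈ A := (Finset.mem_filter.mp hwW).1
      have h2 : 0 < e ⬝ᵥ (w - q) := (Finset.mem_filter.mp hwA).2
      have h4 : g w / (e ⬝ᵥ (w - q)) = g w₀ / (e ⬝ᵥ (w₀ - q)) := hrw.trans hsSdef
      have := (div_eq_div_iff h2.ne' hw₀pos.ne').mp h4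
      linarith
    -- the far endpoint u of the exposed segment
    obtain ⟨u, huW, hgu⟩ := W.exists_max_image g ⟨w₀, hw₀W⟩
    have huD : u ∈ D := hWD huW
    have huq : u ≠ q := Finset.ne_of_mem_erase huD
    have huS' : u ∈ S' := Finset.mem_of_mem_erase huD
    have hqu : q ≠ u := fun h => huq h.symm
    have hgupos : 0 < g u := hg u huD
    have hgw₀pos : 0 < g w₀ := hg w₀ hw₀D
    -- hull of insert q W is the segment [q, u]
    have hraysub : ∀ w ∈ W, w - q = (g w / g u) • (u - q) := by
      intro w hwW
      have hA := hcol w hwW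
      have hB := hcol u huW
      have h1 : (g u * g w₀) • (w - q) = (g w * g w₀) • (u - q) := by
        rw [mul_smul, hA, mul_smul, hB, smul_smul, smul_smul, mul_comm]
      have hne : g u * g w₀ ≠ 0 := (mul_pos hgupos hgw₀pos).ne'
      calc w - q = ((g u * g w₀)⁻¹ * (g u * g w₀)) • (w - q) := by
            rw [inv_mul_cancel₀ hne, one_smul]
        _ = (g u * g w₀)⁻¹ • ((g w * g w₀) • (u - q)) := by rw [mul_smul, h1]
        _ = ((g u * g w₀)⁻¹ * (g w * g w₀)) • (u - q) := (smul_smul _ _ _)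
        _ = (g w / g u) • (u - q) := by
            congr 1
            field_simp
    have hseg : convexHull ℝ ((insert q W : Finset (Fin d → ℝ)) : Set (Fin d → ℝ))
        = segment ℝ q u := by
      apply Set.Subset.antisymm
      · refine convexHull_min ?_ (convex_segment q u)
        intro s hs
        rcases Finset.mem_insert.mp (by exact_mod_cast hs) with h | h
        · exact h ▸ left_mem_segment ℝ q u
        · rw [segment_eq_image' ℝ q u]
          refine ⟨g s / g u, ⟨le_of_lt (div_pos (hg s (hWD h)) hgupos),
            div_le_one_of_le₀ (hgu s h) (le_of_lt hgupos)⟩, ?_⟩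
          have := hraysub s h
          simp only []
          rw [← this]
          abel
      · rw [← convexHull_pair]
        apply convexHull_mono
        intro x hx
        rcases hx with h | h
        · rw [h]; exact Finset.mem_coe.mpr (Finset.mem_insert_self q W)
        · rw [h]; exact Finset.mem_coe.mpr (Finset.mem_insert_of_mem huW)
    -- choose N large
    set R := SQ.filter (fun s => a ⬝ᵥ s ≠ M) with hRdef
    set f : (Fin d → ℝ) → ℝ := fun s => (b' ⬝ᵥ s - b' ⬝ᵥ q) / (M - a ⬝ᵥ s) with hfdef
    set N : ℝ := (if h : R.Nonempty then (R.image f).max' (h.image f) else 0) + 1 with hNdef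
    have hN : ∀ s ∈ R, b' ⬝ᵥ s - b' ⬝ᵥ q < N * (M - a ⬝ᵥ s) := by
      intro s hs
      have hsne : a ⬝ᵥ s ≠ M := (Finset.mem_filter.mp hs).2
      have hslt : a ⬝ᵥ s < M := lt_of_le_of_ne (hq₀max s (Finset.mem_filter.mp hs).1) hsne
      have hpos : 0 < M - a ⬝ᵥ s := by linarith
      have hfs : f s < N := by
        rw [hNdef, dif_pos ⟨s, hs⟩]
        have := (R.image f).le_max' (f s) (Finset.mem_image.mpr ⟨s, hs, rfl⟩)
        linarith
      have : b' ⬝ᵥ s - b' ⬝ᵥ q = f s * (M - a ⬝ᵥ s) := by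
        rw [hfdef]
        field_simp
      rw [this]
      exact mul_lt_mul_of_pos_right hfs hpos
    set b := N • a + b' with hbdef
    have hbval : ∀ x, b ⬝ᵥ x = N * (a ⬝ᵥ x) + b' ⬝ᵥ x := by
      intro x
      rw [hbdef, add_dotProduct, smul_dotProduct, smul_eq_mul]
    have hble : ∀ s ∈ SQ, b ⬝ᵥ s ≤ b ⬝ᵥ q := by
      intro s hs
      rw [hbval, hbval]
      by_cases hsM : a ⬝ᵥ s = M
      · have hsS' : s ∈ S' := Finset.mem_filter.mpr ⟨hs, hsM⟩
        have hqM : a ⬝ᵥ q = M := hS'M q hqS'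
        rw [hsM, hqM]
        by_cases hsq : s = q
        · rw [hsq]
        · have : s ∈ D := Finset.mem_erase.mpr ⟨hsq, hsS'⟩
          linarith [hb'le s this]
      · have hsR : s ∈ R := Finset.mem_filter.mpr ⟨hs, hsM⟩
        have := hN s hsR
        have hqM : a ⬝ᵥ q = M := hS'M q hqS'
        rw [hqM]
        nlinarith
    have hbarg : SQ.filter (fun s => b ⬝ᵥ s = b ⬝ᵥ q) = insert q W := by
      ext s
      simp only [Finset.mem_filter, Finset.mem_insert]
      constructor
      · rintro ⟨hs, heq⟩
        by_cases hsM : a ⬝ᵥ s = M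
        · by_cases hsq : s = q
          · exact Or.inl hsq
          · have hsD : s ∈ D := Finset.mem_erase.mpr ⟨hsq, Finset.mem_filter.mpr ⟨hs, hsM⟩⟩
            have hqM : a ⬝ᵥ q = M := hS'M q hqS'
            rw [hbval, hbval, hsM, hqM] at heq
            have : b' ⬝ᵥ s = b' ⬝ᵥ q := by linarith
            exact Or.inr ((hWeq s hsD).mp this)
        · exfalso
          have hsR : s ∈ R := Finset.mem_filter.mpr ⟨hs, hsM⟩
          have h1 := hN s hsR
          have hqM : a ⬝ᵥ q = M := hS'M q hqS'
          rw [hbval, hbval, hqM] at heq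
          nlinarith
      · rintro (h | h)
        · subst h
          exact ⟨hS'sub hqS', rfl⟩
        · have hsD : s ∈ D := hWD h
          have hsS' : s ∈ S' := Finset.mem_of_mem_erase hsD
          refine ⟨hS'sub hsS', ?_⟩
          have h1 : b' ⬝ᵥ s = b' ⬝ᵥ q := (hWeq s hsD).mpr h
          rw [hbval, hbval, hS'M s hsS', hS'M q hqS', h1]
    -- apply hedges
    have hwit : ∃ s ∈ SQ, b ⬝ᵥ s = b ⬝ᵥ q := ⟨q, hS'sub hqS', rfl⟩
    have hub : ∀ s ∈ SQ, b ⬝ᵥ s ≤ b ⬝ᵥ q := hble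
    have hface := face_eq SQ b (b ⬝ᵥ q) hub hwit
    rw [hbarg] at hface
    have hfaceseg : {x ∈ convexHull ℝ (SQ : Set (Fin d → ℝ)) |
        ∀ y ∈ convexHull ℝ (SQ : Set (Fin d → ℝ)), b ⬝ᵥ y ≤ b ⬝ᵥ x} = segment ℝ q u := by
      rw [hface, hseg]
    obtain ⟨k, t, hkt⟩ := hedges q u hqu ⟨b, hfaceseg⟩
    have haqu : a ⬝ᵥ (q - u) = 0 := by
      rw [dotProduct_sub, hS'M q hqS', hS'M u huS', sub_self]
    have ht0 : t * (a ⬝ᵥ z k) = 0 := by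
      rw [hkt, dotProduct_smul, smul_eq_mul] at haqu
      exact haqu
    have hqune : q - u ≠ 0 := sub_ne_zero.mpr hqu
    rcases mul_eq_zero.mp ht0 with h | h
    · apply hqune
      rw [hkt, h, zero_smul]
    · apply hqune
      rw [hkt, hz k h, smul_zero]
end
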